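/- Let B : I → ℝ^{2×2} be C¹, symmetric positive definite, satisfying ∂_t B = ∇v B + B (∇v)ᵀ − δ(B² − B) with ∇v trace-free and δ ∈ ℝ. Then f(B) = tr B − 2 − ln det B satisfies ∂_t f(B) + δ|B − I|² = 2(B − I) : D, where D = (∇v + ∇vᵀ)/2 and |·| is the Frobenius norm. -/

import Mathlib

open Matrix

attribute [local instance] Matrix.frobeniusNormedAddCommGroup
attribute [local instance] Matrix.frobeniusNormedRing
attribute [local instance] Matrix.frobeniusNormedSpace

noncomputable def fB (B : Matrix (Fin 2) (Fin 2) ℝ) : ℝ :=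
  B.trace - 2 - Real.log B.det

/-- Frobenius inner product. -/
noncomputable def frobInner (A B : Matrix (Fin 2) (Fin 2) ℝ) : ℝ :=
  ∑ i, ∑ j, A i j * B i j

/-- Entry evaluation as a continuous linear map (Frobenius norm). -/
noncomputable def entryCLM (i j : Fin 2) : Matrix (Fin 2) (Fin 2) ℝ →L[ℝ] ℝ :=
  LinearMap.toContinuousLinearMap
    { toFun := fun A => A i j, map_add' := fun _ _ => rfl, map_smul' := fun _ _ => rfl }

lemma entryCLM_apply (i j : Fin 2) (A : Matrix (Fin 2) (Fin 2) ℝ) :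
    entryCLM i j A = A i j := rfl

theorem fB_evolution
    (I : Set ℝ) (hI : I.OrdConnected)
    (B : ℝ → Matrix (Fin 2) (Fin 2) ℝ)
    (gradv : Matrix (Fin 2) (Fin 2) ℝ) (δ : ℝ)
    (htr : gradv.trace = 0)
    (hsym : ∀ t ∈ I, (B t).IsSymm) (hpd : ∀ t ∈ I, (B t).PosDef)
    (hB : ∀ t ∈ I,
      HasDerivAt B (gradv * B t + B t * gradvᵀ - δ • ((B t) ^ 2 - B t)) t) :
    ∀ t ∈ I,
      HasDerivAt (fun s => fB (B s))
        (2 * frobInner (B t - 1) ((1 / 2 : ℝ) • (gradv + gradvᵀ))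
          - δ * frobInner (B t - 1) (B t - 1)) t := by
  intro t ht
  set M : Matrix (Fin 2) (Fin 2) ℝ :=
    gradv * B t + B t * gradvᵀ - δ • ((B t) ^ 2 - B t) with hM
  have hb : ∀ i j, HasDerivAt (fun s => B s i j) (M i j) t := by
    intro i j
    have := (entryCLM i j).hasFDerivAt.comp_hasDerivAt t (hB t ht)
    exact this
  -- determinant as a scalar function
  have hd : HasDerivAt (fun s => B s 0 0 * B s 1 1 - B s 0 1 * B s 1 0)
      (M 0 0 * B t 1 1 + B t 0 0 * M 1 1 - (M 0 1 * B t 1 0 + B t 0 1 * M 1 0)) t :=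
    (((hb 0 0).mul (hb 1 1)).sub ((hb 0 1).mul (hb 1 0)))
  have hdetpos : (0:ℝ) < B t 0 0 * B t 1 1 - B t 0 1 * B t 1 0 := by
    have := (hpd t ht).det_pos
    rwa [Matrix.det_fin_two] at this
  have hlog : HasDerivAt (fun s => Real.log (B s 0 0 * B s 1 1 - B s 0 1 * B s 1 0))
      ((M 0 0 * B t 1 1 + B t 0 0 * M 1 1 - (M 0 1 * B t 1 0 + B t 0 1 * M 1 0)) /
        (B t 0 0 * B t 1 1 - B t 0 1 * B t 1 0)) t :=
    hd.log hdetpos.ne'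
  have htrB : HasDerivAt (fun s => B s 0 0 + B s 1 1) (M 0 0 + M 1 1) t :=
    (hb 0 0).add (hb 1 1)
  have hfB : HasDerivAt (fun s => fB (B s))
      ((M 0 0 + M 1 1) -
        (M 0 0 * B t 1 1 + B t 0 0 * M 1 1 - (M 0 1 * B t 1 0 + B t 0 1 * M 1 0)) /
          (B t 0 0 * B t 1 1 - B t 0 1 * B t 1 0)) t := by
    have h := (htrB.sub_const 2).sub hlog
    have heq : (fun s => fB (B s)) =
        fun s => (B s 0 0 + B s 1 1 - 2) -
          Real.log (B s 0 0 * B s 1 1 - B s 0 1 * B s 1 0) := by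
      funext s
      simp [fB, Matrix.det_fin_two, Matrix.trace_fin_two]
    rw [heq]
    exact h
  have hsy : B t 0 1 = B t 1 0 := (hsym t ht).apply 1 0
  have htr' : gradv 1 1 = -gradv 0 0 := by
    have := htr
    rw [Matrix.trace_fin_two] at this
    linarith
  have hMe : ∀ i j, M i j = gradv i 0 * B t 0 j + gradv i 1 * B t 1 j
      + (B t i 0 * gradv j 0 + B t i 1 * gradv j 1)
      - δ * ((B t i 0 * B t 0 j + B t i 1 * B t 1 j) - B t i j) := by
    intro i j
    simp [hM, Matrix.mul_apply, Fin.sum_univ_two, Matrix.transpose_apply, pow_two,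
      Matrix.smul_apply, Matrix.sub_apply, Matrix.add_apply]
  have key : (M 0 0 + M 1 1) -
        (M 0 0 * B t 1 1 + B t 0 0 * M 1 1 - (M 0 1 * B t 1 0 + B t 0 1 * M 1 0)) /
          (B t 0 0 * B t 1 1 - B t 0 1 * B t 1 0)
      = 2 * frobInner (B t - 1) ((1 / 2 : ℝ) • (gradv + gradvᵀ))
          - δ * frobInner (B t - 1) (B t - 1) := by
    rw [hMe 0 0, hMe 1 1, hMe 0 1, hMe 1 0]
    simp only [frobInner, Fin.sum_univ_two, Matrix.sub_apply, Matrix.add_apply,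
      Matrix.smul_apply, Matrix.transpose_apply, Matrix.one_apply_eq,
      Matrix.one_apply_ne, smul_eq_mul]
    rw [hsy, htr']
    have h01 : (1 : Matrix (Fin 2) (Fin 2) ℝ) 0 1 = 0 := by simp
    have h10 : (1 : Matrix (Fin 2) (Fin 2) ℝ) 1 0 = 0 := by simp
    rw [h01, h10]
    have hne : B t 0 0 * B t 1 1 - B t 1 0 * B t 1 0 ≠ 0 := by
      have h := hdetpos.ne'; rw [hsy] at h; exact h
    have hne2 : B t 0 0 * B t 1 1 - B t 1 0 ^ 2 ≠ 0 := by rw [pow_two]; exact hne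
    field_simp [hne, hne2]
    ring
  rw [← key]
  exact hfB
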